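/- Let E = (f₁,…,f_k, g₁,…,g_p) be a (k+p)-uple of pairwise commuting holomorphic self-maps of 𝔹^q; set F := (f₁,…,f_k) and G := (g₁,…,g_p). Let (𝔹^d, h, Φ) be a canonical Kobayashi hyperbolic semi-model for F, let H := (Γ_F(g₁),…,Γ_F(g_p)) (a p-uple of pairwise commuting holomorphic self-maps of 𝔹^d), let (𝔹^e, r, Θ) be a canonical Kobayashi hyperbolic semi-model for H, and let Ξ := (Γ_H(φ₁),…,Γ_H(φ_k)) (a k-uple of commuting automorphisms of 𝔹^e). Then the triple (𝔹^e, r ∘ h, (Ξ, Θ)) is a canonical Kobayashi hyperbolic semi-model for E. -/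

import Mathlib

open Set Filter

noncomputable section

/-- `E q` is `ℂ^q` as a Euclidean (Hermitian) space. -/
abbrev E (q : ℕ) : Type := EuclideanSpace ℂ (Fin q)

/-- The open unit ball `𝔹^q ⊂ ℂ^q`. -/
def B (q : ℕ) : Set (E q) := Metric.ball 0 1

/-- A holomorphic map from `𝔹^q` to `𝔹^d`: it maps the ball into the ball and is
complex differentiable on the ball. -/
def HolMap (q d : ℕ) (f : E q → E d) : Prop :=
  Set.MapsTo f (B q) (B d) ∧ DifferentiableOn ℂ f (B q)

/-- An automorphism of `𝔹^d`: a holomorphic self-map with a holomorphic inverse on the ball. -/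
def IsAut (d : ℕ) (τ : E d → E d) : Prop :=
  HolMap d d τ ∧ ∃ σ : E d → E d, HolMap d d σ ∧
    Set.EqOn (σ ∘ τ) id (B d) ∧ Set.EqOn (τ ∘ σ) id (B d)

/-- `iterT f N = f₁^{n₁} ∘ ⋯ ∘ f_k^{n_k}` for a `k`-uple `f` and a multi-index `N ∈ ℕ^k`. -/
def iterT {α : Type} {k : ℕ} (f : Fin k → α → α) (N : Fin k → ℕ) : α → α :=
  (List.ofFn fun j => (f j)^[N j]).foldr (· ∘ ·) id

/-- Pairwise commutation (on the ball) of a `k`-uple of self-maps. -/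
def CommutingOn (q k : ℕ) (f : Fin k → E q → E q) : Prop :=
  ∀ i j, Set.EqOn (f i ∘ f j) (f j ∘ f i) (B q)

/-- A quasi-model with ball base for the `k`-uple `f`. -/
def IsQuasiModel (q d k : ℕ) (f : Fin k → E q → E q) (ℓ : E q → E d)
    (τ : Fin k → E d → E d) : Prop :=
  HolMap q d ℓ ∧ (∀ j, IsAut d (τ j)) ∧
    (∀ i j, Set.EqOn (τ i ∘ τ j) (τ j ∘ τ i) (B d)) ∧
    (∀ j, Set.EqOn (ℓ ∘ f j) (τ j ∘ ℓ) (B q))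

/-- A semi-model with ball base: a quasi-model with `⋃_{N ∈ ℕ^k} T^{-N}(ℓ(𝔹^q)) = 𝔹^d`,
where `T^{-N}(S)` is expressed as `{y ∈ 𝔹^d | T^N y ∈ S}`. -/
def IsSemiModel (q d k : ℕ) (f : Fin k → E q → E q) (ℓ : E q → E d)
    (τ : Fin k → E d → E d) : Prop :=
  IsQuasiModel q d k f ℓ τ ∧
    (⋃ N : Fin k → ℕ, B d ∩ (iterT τ N) ⁻¹' (ℓ '' B q)) = B d

/-- A canonical Kobayashi hyperbolic semi-model (CSM) with ball base: a semi-model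
through which every quasi-model with ball base (necessarily uniquely) factorizes. -/
def IsCSM (q d k : ℕ) (f : Fin k → E q → E q) (ℓ : E q → E d)
    (τ : Fin k → E d → E d) : Prop :=
  IsSemiModel q d k f ℓ τ ∧
    ∀ (m : ℕ) (h : E q → E m) (φ : Fin k → E m → E m),
      IsQuasiModel q m k f h φ →
      ∃ η : E d → E m, HolMap d m η ∧ Set.EqOn (η ∘ ℓ) h (B q) ∧
        ∀ j, Set.EqOn (η ∘ τ j) (φ j ∘ η) (B d)

/-- Inverse hyperbolic tangent. -/
def arctanh (t : ℝ) : ℝ := Real.log ((1 + t) / (1 - t)) / 2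

/-- The Kobayashi distance of the unit ball `𝔹^q`:
`k_{𝔹^q}(z,w) = arctanh √(1 − (1−‖z‖²)(1−‖w‖²)/|1−⟨z,w⟩|²)`. -/
def kob (q : ℕ) (z w : E q) : ℝ :=
  arctanh (Real.sqrt (1 - ((1 - ‖z‖ ^ 2) * (1 - ‖w‖ ^ 2)) /
    ‖(1 - (inner ℂ z w : ℂ))‖ ^ 2))

/-- The Kobayashi ball of center `p` and radius `r` in `𝔹^q`. -/
def Bk (q : ℕ) (p : E q) (r : ℝ) : Set (E q) := {z ∈ B q | kob q z p < r}

/-- `p ∈ ∂𝔹^q` is the Denjoy–Wolff point of `f`: the iterates of `f` converge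
locally uniformly on `𝔹^q` to the constant `p`. -/
def IsDW (q : ℕ) (f : E q → E q) (p : E q) : Prop :=
  ‖p‖ = 1 ∧
    TendstoLocallyUniformlyOn (fun n z => f^[n] z) (fun _ => p) Filter.atTop (B q)

/-- The dilation `λ = liminf_{z→p} (1−‖f(z)‖)/(1−‖z‖)` of `f` at a boundary point `p`. -/
def dilation (q : ℕ) (f : E q → E q) (p : E q) : ℝ :=
  Filter.liminf (fun z => (1 - ‖f z‖) / (1 - ‖z‖)) (nhdsWithin p (B q))

/-- The rank of the complex differential of `f` at `y`. -/
def rankAt (q d : ℕ) (f : E q → E d) (y : E q) : ℕ :=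
  Module.finrank ℂ (LinearMap.range (fderiv ℂ f y).toLinearMap)

/-- A quasi-model with ball base for a single self-map `f`. -/
def IsQuasiModel1 (q d : ℕ) (f : E q → E q) (ℓ : E q → E d) (τ : E d → E d) : Prop :=
  HolMap q d ℓ ∧ IsAut d τ ∧ Set.EqOn (ℓ ∘ f) (τ ∘ ℓ) (B q)

/-- A semi-model with ball base for a single self-map `f`. -/
def IsSemiModel1 (q d : ℕ) (f : E q → E q) (ℓ : E q → E d) (τ : E d → E d) : Prop :=
  IsQuasiModel1 q d f ℓ τ ∧ (⋃ n : ℕ, B d ∩ τ^[n] ⁻¹' (ℓ '' B q)) = B d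

/-- A canonical Kobayashi hyperbolic semi-model with ball base for a single self-map `f`. -/
def IsCSM1 (q d : ℕ) (f : E q → E q) (ℓ : E q → E d) (τ : E d → E d) : Prop :=
  IsSemiModel1 q d f ℓ τ ∧
    ∀ (m : ℕ) (h : E q → E m) (φ : E m → E m), IsQuasiModel1 q m f h φ →
      ∃ η : E d → E m, HolMap d m η ∧ Set.EqOn (η ∘ ℓ) h (B q) ∧
        Set.EqOn (η ∘ τ) (φ ∘ η) (B d)

/-!
Everything rests on one uniqueness principle for a semi-model `(𝔹^d, ℓ, T)`: two maps that
intertwine `T` with a tuple `Ψ` of automorphisms and agree on `ℓ(𝔹^q)` agree on `𝔹^d`, because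
every point is moved into `ℓ(𝔹^q)` by some `T^N` and `Ψ^N` is injective. It shows that the `Ξ_j`
commute, and that `Ξ_j` is an automorphism whose inverse is `Γ_H(φ_j⁻¹)`. A point of `𝔹^e` is
moved into `r(𝔹^d)` by some `Θ^P` and then into `r(h(𝔹^q))` by some `Ξ^M`, since
`Ξ ∘ r = r ∘ Φ`. A quasi-model `(𝔹^m, l, Ψ)` for `E` factors as `α ∘ h` through the CSM for
`F`; by uniqueness `α` intertwines `H` with the `G`-part of `Ψ`, so `α` factors as `η ∘ r`
through the CSM for `H`, and uniqueness again shows that `η` intertwines `Ξ` with the `F`-part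
of `Ψ`.
-/

open Function

theorem List.foldr_comp_append {α : Type} (L₁ L₂ : List (α → α)) :
    (L₁ ++ L₂).foldr (· ∘ ·) id = L₁.foldr (· ∘ ·) id ∘ L₂.foldr (· ∘ ·) id := by
  induction L₁ with
  | nil => rfl
  | cons f L ih => rw [List.cons_append, List.foldr_cons, List.foldr_cons, ih, comp_assoc]

section IterT

variable {α β : Type} {S : Set α}

theorem iterT_succ {k : ℕ} (f : Fin (k + 1) → α → α) (N : Fin (k + 1) → ℕ) :
    iterT f N = (f 0)^[N 0] ∘ iterT (fun i => f i.succ) (fun i => N i.succ) := by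
  rw [iterT, List.ofFn_succ, List.foldr_cons]
  rfl

theorem iterT_append {k p : ℕ} (f : Fin k → α → α) (g : Fin p → α → α)
    (M : Fin k → ℕ) (P : Fin p → ℕ) :
    iterT (Fin.append f g) (Fin.append M P) = iterT f M ∘ iterT g P := by
  simp only [iterT, List.ofFn_add, Fin.append_left', Fin.append_right]
  exact List.foldr_comp_append _ _

theorem Set.MapsTo.iterT {k : ℕ} {f : Fin k → α → α} (hf : ∀ j, MapsTo (f j) S S)
    (N : Fin k → ℕ) : MapsTo (iterT f N) S S := by
  induction k with
  | zero => exact mapsTo_id S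
  | succ k ih =>
    rw [iterT_succ]
    exact ((hf 0).iterate _).comp (ih (fun j => hf j.succ) _)

theorem Set.InjOn.iterT {k : ℕ} {f : Fin k → α → α} (hf : ∀ j, InjOn (f j) S)
    (hmaps : ∀ j, MapsTo (f j) S S) (N : Fin k → ℕ) : InjOn (iterT f N) S := by
  induction k with
  | zero => exact injOn_id S
  | succ k ih =>
    rw [iterT_succ]
    exact ((hf 0).iterate (hmaps 0) _).comp (ih (fun j => hf j.succ) (fun j => hmaps j.succ) _)
      (MapsTo.iterT (fun j => hmaps j.succ) _)

theorem Set.EqOn.comp_iterate {g : α → α} {δ : α → β} {ψ : β → β}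
    (h : EqOn (δ ∘ g) (ψ ∘ δ) S) (hg : MapsTo g S S) (n : ℕ) :
    EqOn (δ ∘ g^[n]) (ψ^[n] ∘ δ) S := by
  induction n with
  | zero => exact fun _ _ => rfl
  | succ n ih =>
    intro x hx
    calc δ (g^[n + 1] x) = δ (g (g^[n] x)) := by rw [iterate_succ_apply']
      _ = ψ (ψ^[n] (δ x)) := (h (hg.iterate n hx)).trans (congrArg ψ (ih hx))
      _ = ψ^[n + 1] (δ x) := (iterate_succ_apply' ..).symm

theorem Set.EqOn.comp_iterT {k : ℕ} {f : Fin k → α → α} {ψ : Fin k → β → β} {δ : α → β}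
    (h : ∀ j, EqOn (δ ∘ f j) (ψ j ∘ δ) S) (hf : ∀ j, MapsTo (f j) S S) (N : Fin k → ℕ) :
    EqOn (δ ∘ iterT f N) (iterT ψ N ∘ δ) S := by
  induction k with
  | zero => exact fun _ _ => rfl
  | succ k ih =>
    intro x hx
    rw [iterT_succ, iterT_succ]
    exact ((h 0).comp_iterate (hf 0) _ (MapsTo.iterT (fun j => hf j.succ) _ hx)).trans
      (congrArg _ (ih (fun j => h j.succ) (fun j => hf j.succ) _ hx))

end IterT

theorem Set.InvOn.comp_eqOn_comm {α : Type*} {S : Set α} {σ φ g : α → α}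
    (hinv : InvOn σ φ S S) (hσ : MapsTo σ S S) (hg : MapsTo g S S)
    (hφg : EqOn (φ ∘ g) (g ∘ φ) S) : EqOn (σ ∘ g) (g ∘ σ) S := by
  intro x hx
  calc σ (g x) = σ (g (φ (σ x))) := by rw [hinv.2 hx]
    _ = σ (φ (g (σ x))) := congrArg σ (hφg (hσ hx)).symm
    _ = g (σ x) := hinv.1 (hg (hσ hx))

theorem HolMap.comp {q d e : ℕ} {r : E d → E e} {h : E q → E d}
    (hr : HolMap d e r) (hh : HolMap q d h) : HolMap q e (r ∘ h) :=
  ⟨hr.1.comp hh.1, hr.2.comp hh.2 hh.1⟩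

theorem IsAut.mapsTo {d : ℕ} {τ : E d → E d} (h : IsAut d τ) : MapsTo τ (B d) (B d) :=
  h.1.1

theorem IsAut.injOn {d : ℕ} {τ : E d → E d} (h : IsAut d τ) : InjOn τ (B d) := by
  obtain ⟨-, σ, -, hστ, -⟩ := h
  exact LeftInvOn.injOn hστ

theorem CommutingOn.append {e k p : ℕ} {Ξ : Fin k → E e → E e} {Θ : Fin p → E e → E e}
    (hΞ : CommutingOn e k Ξ) (hΘ : CommutingOn e p Θ)
    (hΞΘ : ∀ j i, EqOn (Ξ j ∘ Θ i) (Θ i ∘ Ξ j) (B e)) :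
    CommutingOn e (k + p) (Fin.append Ξ Θ) := by
  intro a b
  cases a using Fin.addCases <;> cases b using Fin.addCases <;>
    simp only [Fin.append_left, Fin.append_right]
  exacts [hΞ _ _, hΞΘ _ _, (hΞΘ _ _).symm, hΘ _ _]

theorem Set.EqOn.comp_semiconj {α β γ : Type*} {S : Set α} {T : Set β} {ℓ₁ : α → β}
    {ℓ₂ : β → γ} {f : α → α} {g : β → β} {χ : γ → γ} (h₁ : EqOn (ℓ₁ ∘ f) (g ∘ ℓ₁) S)
    (h₂ : EqOn (ℓ₂ ∘ g) (χ ∘ ℓ₂) T) (hℓ₁ : MapsTo ℓ₁ S T) :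
    EqOn ((ℓ₂ ∘ ℓ₁) ∘ f) (χ ∘ (ℓ₂ ∘ ℓ₁)) S := fun _ hx =>
  (congrArg ℓ₂ (h₁ hx)).trans (h₂ (hℓ₁ hx))

theorem IsQuasiModel.reindex {q m k n : ℕ} {f : Fin k → E q → E q} {l : E q → E m}
    {ψ : Fin k → E m → E m} (hl : IsQuasiModel q m k f l ψ) (ι : Fin n → Fin k) :
    IsQuasiModel q m n (f ∘ ι) l (ψ ∘ ι) :=
  ⟨hl.1, fun j => hl.2.1 (ι j), fun i j => hl.2.2.1 (ι i) (ι j), fun j => hl.2.2.2 (ι j)⟩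

section SemiModel

variable {q d k m : ℕ} {f : Fin k → E q → E q} {ℓ : E q → E d} {τ : Fin k → E d → E d}

theorem IsSemiModel.eqOn_of_semiconj (hsm : IsSemiModel q d k f ℓ τ)
    {ψ : Fin k → E m → E m} (hψ : ∀ j, IsAut m (ψ j))
    {δ₁ δ₂ : E d → E m} (h₁ : MapsTo δ₁ (B d) (B m)) (h₂ : MapsTo δ₂ (B d) (B m))
    (hℓ : EqOn (δ₁ ∘ ℓ) (δ₂ ∘ ℓ) (B q)) (hτ₁ : ∀ j, EqOn (δ₁ ∘ τ j) (ψ j ∘ δ₁) (B d))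
    (hτ₂ : ∀ j, EqOn (δ₂ ∘ τ j) (ψ j ∘ δ₂) (B d)) :
    EqOn δ₁ δ₂ (B d) := by
  intro x hx
  obtain ⟨N, -, z, hz, hzx⟩ := mem_iUnion.mp (hsm.2.symm ▸ hx : x ∈ ⋃ N, _)
  have hτ : ∀ j, MapsTo (τ j) (B d) (B d) := fun j => (hsm.1.2.1 j).mapsTo
  refine InjOn.iterT (fun j => (hψ j).injOn) (fun j => (hψ j).mapsTo) N (h₁ hx) (h₂ hx) ?_
  calc iterT ψ N (δ₁ x) = δ₁ (ℓ z) := by rw [hzx]; exact (EqOn.comp_iterT hτ₁ hτ N hx).symm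
    _ = δ₂ (ℓ z) := hℓ hz
    _ = iterT ψ N (δ₂ x) := by rw [hzx]; exact EqOn.comp_iterT hτ₂ hτ N hx

theorem IsSemiModel.semiconj_of_semiconj_on_image (hsm : IsSemiModel q d k f ℓ τ)
    {ψ : Fin k → E m → E m} (hψ : ∀ j, IsAut m (ψ j)) {α : E d → E m} {Γ : E d → E d}
    {χ : E m → E m} (hα : MapsTo α (B d) (B m)) (hατ : ∀ j, EqOn (α ∘ τ j) (ψ j ∘ α) (B d))
    (hΓ : MapsTo Γ (B d) (B d)) (hΓτ : ∀ j, EqOn (Γ ∘ τ j) (τ j ∘ Γ) (B d))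
    (hχ : MapsTo χ (B m) (B m)) (hχψ : ∀ j, EqOn (χ ∘ ψ j) (ψ j ∘ χ) (B m))
    (hℓ : EqOn (α ∘ Γ ∘ ℓ) (χ ∘ α ∘ ℓ) (B q)) :
    EqOn (α ∘ Γ) (χ ∘ α) (B d) :=
  hsm.eqOn_of_semiconj hψ (hα.comp hΓ) (hχ.comp hα) hℓ
    (fun j => (hΓτ j).comp_semiconj (hατ j) hΓ) fun j => (hατ j).comp_semiconj (hχψ j) hα

theorem IsSemiModel.commutingOn_of_semiconj (hsm : IsSemiModel q d k f ℓ τ) {n : ℕ}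
    {φ : Fin n → E q → E q} (hφ : CommutingOn q n φ) (hφm : ∀ j, MapsTo (φ j) (B q) (B q))
    {Γ : Fin n → E d → E d} (hΓm : ∀ j, MapsTo (Γ j) (B d) (B d))
    (hΓℓ : ∀ j, EqOn (Γ j ∘ ℓ) (ℓ ∘ φ j) (B q))
    (hΓτ : ∀ j i, EqOn (Γ j ∘ τ i) (τ i ∘ Γ j) (B d)) :
    CommutingOn d n Γ := by
  intro a b
  refine hsm.semiconj_of_semiconj_on_image hsm.1.2.1 (hΓm a) (hΓτ a) (hΓm b)
    (hΓτ b) (hΓm b) (hΓτ b) fun z hz => ?_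
  calc Γ a (Γ b (ℓ z)) = Γ a (ℓ (φ b z)) := congrArg (Γ a) (hΓℓ b hz)
    _ = ℓ (φ a (φ b z)) := hΓℓ a (hφm b hz)
    _ = ℓ (φ b (φ a z)) := congrArg ℓ (hφ a b hz)
    _ = Γ b (ℓ (φ a z)) := (hΓℓ b (hφm a hz)).symm
    _ = Γ b (Γ a (ℓ z)) := congrArg (Γ b) (hΓℓ a hz).symm

theorem IsCSM.isAut_of_semiconj (hcsm : IsCSM q d k f ℓ τ)
    (hf : ∀ j, MapsTo (f j) (B q) (B q)) {φ : E q → E q} (hφ : IsAut q φ)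
    (hφf : ∀ j, EqOn (φ ∘ f j) (f j ∘ φ) (B q)) {Γ : E d → E d} (hΓ : HolMap d d Γ)
    (hΓℓ : EqOn (Γ ∘ ℓ) (ℓ ∘ φ) (B q)) (hΓτ : ∀ j, EqOn (Γ ∘ τ j) (τ j ∘ Γ) (B d)) :
    IsAut d Γ := by
  obtain ⟨⟨hℓ, hτ, hττ, hℓf⟩, -⟩ := hcsm.1
  have hφm := hφ.mapsTo
  obtain ⟨-, σ, hσ, hσφ, hφσ⟩ := hφ
  have hσf : ∀ j, EqOn (σ ∘ f j) (f j ∘ σ) (B q) := fun j =>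
    InvOn.comp_eqOn_comm ⟨hσφ, hφσ⟩ hσ.1 (hf j) (hφf j)
  obtain ⟨η, hη, hηℓ, hητ⟩ := hcsm.2 d (ℓ ∘ σ) τ
    ⟨hℓ.comp hσ, hτ, hττ, fun j => (hσf j).comp_semiconj (hℓf j) hσ.1⟩
  refine ⟨hΓ, η, hη, ?_, ?_⟩
  · refine hcsm.1.eqOn_of_semiconj hτ (hη.1.comp hΓ.1) (mapsTo_id _) (fun z hz => ?_)
      (fun j => (hΓτ j).comp_semiconj (hητ j) hΓ.1) fun _ _ _ => rfl
    calc η (Γ (ℓ z)) = η (ℓ (φ z)) := congrArg η (hΓℓ hz)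
      _ = ℓ (σ (φ z)) := hηℓ (hφm hz)
      _ = ℓ z := congrArg ℓ (hσφ hz)
  · refine hcsm.1.eqOn_of_semiconj hτ (hΓ.1.comp hη.1) (mapsTo_id _) (fun z hz => ?_)
      (fun j => (hητ j).comp_semiconj (hΓτ j) hη.1) fun _ _ _ => rfl
    calc Γ (η (ℓ z)) = Γ (ℓ (σ z)) := congrArg Γ (hηℓ hz)
      _ = ℓ (φ (σ z)) := hΓℓ (hσ.1 hz)
      _ = ℓ z := congrArg ℓ (hφσ hz)

end SemiModel

theorem iUnion_inter_iterT_append_preimage_image_comp {q d e k p : ℕ} {h : E q → E d}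
    {r : E d → E e} {Φ : Fin k → E d → E d} {Θ : Fin p → E e → E e} {Ξ : Fin k → E e → E e}
    (hΦ : (⋃ M : Fin k → ℕ, B d ∩ iterT Φ M ⁻¹' (h '' B q)) = B d)
    (hΘ : (⋃ P : Fin p → ℕ, B e ∩ iterT Θ P ⁻¹' (r '' B d)) = B e)
    (hΦm : ∀ j, MapsTo (Φ j) (B d) (B d)) (hΞr : ∀ j, EqOn (Ξ j ∘ r) (r ∘ Φ j) (B d)) :
    (⋃ N : Fin (k + p) → ℕ, B e ∩ iterT (Fin.append Ξ Θ) N ⁻¹' ((r ∘ h) '' B q)) = B e := by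
  refine (iUnion_subset fun N => inter_subset_left).antisymm fun y hy => ?_
  obtain ⟨P, -, x, hx, hxy⟩ := mem_iUnion.mp (hΘ.symm ▸ hy : y ∈ ⋃ P, _)
  obtain ⟨M, -, z, hz, hzx⟩ := mem_iUnion.mp (hΦ.symm ▸ hx : x ∈ ⋃ M, _)
  refine mem_iUnion.mpr ⟨Fin.append M P, hy, z, hz, ?_⟩
  calc r (h z) = r (iterT Φ M x) := by rw [hzx]
    _ = iterT Ξ M (r x) := EqOn.comp_iterT (fun j => (hΞr j).symm) hΦm M hx
    _ = iterT (Fin.append Ξ Θ) (Fin.append M P) y := by rw [iterT_append, comp_apply, hxy]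

theorem exists_factor_of_isQuasiModel_append {q k p d e m : ℕ} {Em : Fin (k + p) → E q → E q}
    (hEm : ∀ j, MapsTo (Em j) (B q) (B q)) {h : E q → E d} {Φ : Fin k → E d → E d}
    (hFcsm : IsCSM q d k (fun j => Em (Fin.castAdd p j)) h Φ) {H : Fin p → E d → E d}
    (hHm : ∀ i, MapsTo (H i) (B d) (B d))
    (hHh : ∀ i, EqOn (H i ∘ h) (h ∘ Em (Fin.natAdd k i)) (B q))
    (hHΦ : ∀ i j, EqOn (H i ∘ Φ j) (Φ j ∘ H i) (B d)) {r : E d → E e} {Θ : Fin p → E e → E e}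
    (hHcsm : IsCSM d e p H r Θ) {Ξ : Fin k → E e → E e} (hΞm : ∀ j, MapsTo (Ξ j) (B e) (B e))
    (hΞr : ∀ j, EqOn (Ξ j ∘ r) (r ∘ Φ j) (B d))
    (hΞΘ : ∀ j i, EqOn (Ξ j ∘ Θ i) (Θ i ∘ Ξ j) (B e)) {l : E q → E m}
    {ψ : Fin (k + p) → E m → E m} (hl : IsQuasiModel q m (k + p) Em l ψ) :
    ∃ η : E e → E m, HolMap e m η ∧ EqOn (η ∘ (r ∘ h)) l (B q) ∧
      ∀ j, EqOn (η ∘ Fin.append Ξ Θ j) (ψ j ∘ η) (B e) := by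
  obtain ⟨α, hα, hαh, hαΦ⟩ := hFcsm.2 m l _ (hl.reindex (Fin.castAdd p))
  obtain ⟨-, hψ, hψψ, hlEm⟩ := hl
  have hαH : ∀ i, EqOn (α ∘ H i) (ψ (Fin.natAdd k i) ∘ α) (B d) := fun i =>
    hFcsm.1.semiconj_of_semiconj_on_image (fun j => hψ _) hα.1 hαΦ (hHm i) (hHΦ i)
      (hψ _).mapsTo (fun j => hψψ _ _) fun z hz => by
        calc α (H i (h z)) = α (h (Em (Fin.natAdd k i) z)) := congrArg α (hHh i hz)
          _ = l (Em _ z) := hαh (hEm _ hz)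
          _ = ψ _ (l z) := hlEm _ hz
          _ = ψ _ (α (h z)) := congrArg _ (hαh hz).symm
  obtain ⟨η, hη, hηr, hηΘ⟩ := hHcsm.2 m α _ ⟨hα, fun i => hψ _, fun _ _ => hψψ _ _, hαH⟩
  have hηΞ : ∀ j, EqOn (η ∘ Ξ j) (ψ (Fin.castAdd p j) ∘ η) (B e) := fun j =>
    hHcsm.1.semiconj_of_semiconj_on_image (fun i => hψ _) hη.1 hηΘ (hΞm j) (hΞΘ j)
      (hψ _).mapsTo (fun i => hψψ _ _) fun x hx => by
        calc η (Ξ j (r x)) = η (r (Φ j x)) := congrArg η (hΞr j hx)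
          _ = α (Φ j x) := hηr ((hFcsm.1.1.2.1 j).mapsTo hx)
          _ = ψ _ (α x) := hαΦ j hx
          _ = ψ _ (η (r x)) := congrArg _ (hηr hx).symm
  refine ⟨η, hη, fun z hz => (hηr (hFcsm.1.1.1.1 hz)).trans (hαh hz), Fin.addCases ?_ ?_⟩
  · intro j; simpa only [Fin.append_left] using hηΞ j
  · intro i; simpa only [Fin.append_right] using hηΘ i

theorem CSM_composition_general (q k p d e : ℕ) (Em : Fin (k + p) → E q → E q)
    (hEm : ∀ j, HolMap q q (Em j))
    (F : Fin k → E q → E q) (G : Fin p → E q → E q)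
    (hFdef : ∀ j, F j = Em (Fin.castAdd p j)) (hGdef : ∀ i, G i = Em (Fin.natAdd k i))
    (h : E q → E d) (Φ : Fin k → E d → E d) (hFcsm : IsCSM q d k F h Φ)
    (H : Fin p → E d → E d)
    (hH : ∀ i, HolMap d d (H i) ∧ Set.EqOn (H i ∘ h) (h ∘ G i) (B q) ∧
      ∀ j, Set.EqOn (H i ∘ Φ j) (Φ j ∘ H i) (B d))
    (r : E d → E e) (Θ : Fin p → E e → E e) (hHcsm : IsCSM d e p H r Θ)
    (Ξ : Fin k → E e → E e)
    (hΞ : ∀ j, HolMap e e (Ξ j) ∧ Set.EqOn (Ξ j ∘ r) (r ∘ Φ j) (B d) ∧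
      ∀ i, Set.EqOn (Ξ j ∘ Θ i) (Θ i ∘ Ξ j) (B e)) :
    IsCSM q e (k + p) Em (r ∘ h) (Fin.append Ξ Θ) := by
  obtain rfl : F = fun j => Em (Fin.castAdd p j) := funext hFdef
  obtain rfl : G = fun i => Em (Fin.natAdd k i) := funext hGdef
  obtain ⟨⟨hh, hΦ, hΦΦ, hhΦ⟩, hFunion⟩ := hFcsm.1
  obtain ⟨⟨hr, hΘ, hΘΘ, hrΘ⟩, hHunion⟩ := hHcsm.1
  have hΦm : ∀ j, MapsTo (Φ j) (B d) (B d) := fun j => (hΦ j).mapsTo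
  have hHm : ∀ i, MapsTo (H i) (B d) (B d) := fun i => (hH i).1.1
  have hΞaut : ∀ j, IsAut e (Ξ j) := fun j =>
    hHcsm.isAut_of_semiconj hHm (hΦ j) (fun i => ((hH i).2.2 j).symm) (hΞ j).1 (hΞ j).2.1
      (hΞ j).2.2
  have hΞΞ : CommutingOn e k Ξ :=
    hHcsm.1.commutingOn_of_semiconj hΦΦ hΦm (fun j => (hΞ j).1.1) (fun j => (hΞ j).2.1)
      fun j => (hΞ j).2.2
  have hT : ∀ j, IsAut e (Fin.append Ξ Θ j) := (Fin.forall_fin_add _).2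
    ⟨fun j => by simpa only [Fin.append_left] using hΞaut j,
      fun i => by simpa only [Fin.append_right] using hΘ i⟩
  have hrhT : ∀ j, EqOn ((r ∘ h) ∘ Em j) (Fin.append Ξ Θ j ∘ (r ∘ h)) (B q) :=
    (Fin.forall_fin_add _).2
      ⟨fun j => by simpa only [Fin.append_left] using (hhΦ j).comp_semiconj (hΞ j).2.1.symm hh.1,
        fun i => by simpa only [Fin.append_right] using (hH i).2.1.symm.comp_semiconj (hrΘ i) hh.1⟩
  refine ⟨⟨⟨hr.comp hh, hT, hΞΞ.append hΘΘ fun j => (hΞ j).2.2, hrhT⟩,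
    iUnion_inter_iterT_append_preimage_image_comp hFunion hHunion hΦm fun j => (hΞ j).2.1⟩,
    fun _ _ _ => exists_factor_of_isQuasiModel_append (fun j => (hEm j).1) hFcsm hHm
      (fun i => (hH i).2.1) (fun i => (hH i).2.2) hHcsm (fun j => (hΞ j).1.1)
      (fun j => (hΞ j).2.1) (fun j => (hΞ j).2.2)⟩

/-- composition of canonical semi-models. If `(𝔹^d, h, Φ)` is a CSM for
`F = (f₁,…,f_k)`, `H = (Γ_F(g₁),…,Γ_F(g_p))`, `(𝔹^e, r, Θ)` is a CSM for `H` and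
`Ξ = (Γ_H(φ₁),…,Γ_H(φ_k))`, then `(𝔹^e, r ∘ h, (Ξ, Θ))` is a CSM for
`E = (f₁,…,f_k,g₁,…,g_p)`. -/
theorem CSM_composition (q k p d e : ℕ) (Em : Fin (k + p) → E q → E q)
    (hEm : ∀ j, HolMap q q (Em j)) (hcommE : CommutingOn q (k + p) Em)
    (F : Fin k → E q → E q) (G : Fin p → E q → E q)
    (hFdef : ∀ j, F j = Em (Fin.castAdd p j)) (hGdef : ∀ i, G i = Em (Fin.natAdd k i))
    (h : E q → E d) (Φ : Fin k → E d → E d) (hFcsm : IsCSM q d k F h Φ)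
    (H : Fin p → E d → E d)
    (hH : ∀ i, HolMap d d (H i) ∧ Set.EqOn (H i ∘ h) (h ∘ G i) (B q) ∧
      ∀ j, Set.EqOn (H i ∘ Φ j) (Φ j ∘ H i) (B d))
    (hHcomm : CommutingOn d p H)
    (r : E d → E e) (Θ : Fin p → E e → E e) (hHcsm : IsCSM d e p H r Θ)
    (Ξ : Fin k → E e → E e)
    (hΞ : ∀ j, HolMap e e (Ξ j) ∧ Set.EqOn (Ξ j ∘ r) (r ∘ Φ j) (B d) ∧
      ∀ i, Set.EqOn (Ξ j ∘ Θ i) (Θ i ∘ Ξ j) (B e)) :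
    IsCSM q e (k + p) Em (r ∘ h) (Fin.append Ξ Θ) :=
  CSM_composition_general q k p d e Em hEm F G hFdef hGdef h Φ hFcsm H hH r Θ hHcsm Ξ hΞ
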